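/- Consider minimizing f(φ) = Σᵢ cᵢ²/φᵢ over φ with Σᵢ φᵢ = Nα₀ and αℓ ≤ φᵢ ≤ 1 for each i, where 0 < αℓ < α₀ < 1 and cᵢ > 0. Then the minimizer has the form φᵢ* = max{αℓ, min(γ cᵢ / c̄, 1)} for some γ > 0 chosen so that Σᵢ φᵢ* = Nα₀, where c̄ = N⁻¹ Σⱼ cⱼ. -/

import Mathlib

/-!
With the multiplier `λ = (c̄ / γ)²` for the equality constraint, each summand of the Lagrangian
`∑ᵢ (cᵢ² / φᵢ + λ φᵢ)` is, up to the factor `λ`, the convex function `x ↦ mᵢ² / x + x` with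
`mᵢ = γ cᵢ / c̄`. Its minimiser on `[αℓ, 1]` is the projection `max αℓ (min mᵢ 1)` of its
unconstrained minimiser `mᵢ`, i.e. `φᵢ*`; since every feasible `φ` has the same `∑ φᵢ`, minimising
the Lagrangian coordinatewise minimises the objective.
-/

open Finset

theorem Finset.sum_le_sum_of_add_mul_le {ι R : Type*} [CommRing R] [PartialOrder R]
    [IsOrderedAddMonoid R] (s : Finset ι) (f : ι → R → R) (lam : R) {p q : ι → R}
    (hsum : ∑ i ∈ s, p i = ∑ i ∈ s, q i)
    (hle : ∀ i ∈ s, f i (p i) + lam * p i ≤ f i (q i) + lam * q i) :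
    ∑ i ∈ s, f i (p i) ≤ ∑ i ∈ s, f i (q i) := by
  have := Finset.sum_le_sum hle
  rwa [sum_add_distrib, sum_add_distrib, ← mul_sum, ← mul_sum, hsum, add_le_add_iff_right] at this

section

variable {K : Type*} [Field K] [LinearOrder K] [IsStrictOrderedRing K]

theorem sq_div_add_le_sq_div_add {m p x : K} (hp : 0 < p) (hx : 0 < x)
    (h : 0 ≤ (x - p) * (x * p - m ^ 2)) :
    m ^ 2 / p + p ≤ m ^ 2 / x + x := by
  have key : m ^ 2 / x + x - (m ^ 2 / p + p) = (x - p) * (x * p - m ^ 2) / (x * p) := by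
    field_simp
    ring
  have : 0 ≤ m ^ 2 / x + x - (m ^ 2 / p + p) := key ▸ div_nonneg h (mul_pos hx hp).le
  linarith

theorem sq_div_add_clamp_le {m a b x : K} (hm : 0 ≤ m) (ha : 0 < a) (hx : x ∈ Set.Icc a b) :
    m ^ 2 / max a (min m b) + max a (min m b) ≤ m ^ 2 / x + x := by
  obtain ⟨hax, hxb⟩ := hx
  apply sq_div_add_le_sq_div_add (ha.trans_le (le_max_left _ _)) (ha.trans_le hax)
  rcases le_total m a with hma | ham
  · rw [max_eq_left (min_le_of_left_le hma)]
    have : m ^ 2 ≤ x * a := by nlinarith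
    nlinarith
  rcases le_total m b with hmb | hbm
  · rw [min_eq_left hmb, max_eq_right ham]
    nlinarith [sq_nonneg (x - m)]
  · rw [min_eq_right hbm, max_eq_right (hax.trans hxb)]
    have : x * b ≤ m ^ 2 := by nlinarith
    nlinarith

end

/-- KKT characterization of the box-constrained optimal sampling probabilities:
`φᵢ* = max{αℓ, min(γ cᵢ / c̄, 1)}` (with `γ` chosen so that `∑ φᵢ* = N α₀`)
minimizes `∑ cᵢ² / φᵢ` subject to `∑ φᵢ = N α₀` and `αℓ ≤ φᵢ ≤ 1`. -/
theorem stmt_12 (N : ℕ) (hN : 1 ≤ N) (c : Fin N → ℝ) (hc : ∀ i, 0 < c i)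
    (αℓ α₀ γ : ℝ) (hαℓ : 0 < αℓ) (hℓ₀ : αℓ < α₀) (h₀ : α₀ < 1) (hγ : 0 < γ) :
    let cbar : ℝ := (∑ j, c j) / N
    let φstar : Fin N → ℝ := fun i => max αℓ (min (γ * c i / cbar) 1)
    (∑ i, φstar i = N * α₀) →
    ((∀ i, αℓ ≤ φstar i ∧ φstar i ≤ 1) ∧
      ∀ φ : Fin N → ℝ, (∀ i, αℓ ≤ φ i ∧ φ i ≤ 1) → (∑ i, φ i = N * α₀) →
        ∑ i, (c i) ^ 2 / φstar i ≤ ∑ i, (c i) ^ 2 / φ i) := by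
  intro cbar φstar hsum
  have hcbar : 0 < cbar := by
    have : Nonempty (Fin N) := ⟨⟨0, hN⟩⟩
    exact div_pos (sum_pos (fun j _ => hc j) univ_nonempty) (by exact_mod_cast hN)
  refine ⟨fun i => ⟨le_max_left _ _, max_le (hℓ₀.trans h₀).le (min_le_right _ _)⟩,
    fun φ hφ hφsum => ?_⟩
  set μ := cbar / γ with hμ
  refine sum_le_sum_of_add_mul_le univ (fun i y => c i ^ 2 / y) (μ ^ 2) (hsum.trans hφsum.symm)
    fun i _ => ?_
  have hm : 0 ≤ γ * c i / cbar := div_nonneg (mul_pos hγ (hc i)).le hcbar.le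
  have hc_eq : c i = μ * (γ * c i / cbar) := by rw [hμ]; field_simp
  have hscale : ∀ y, c i ^ 2 / y + μ ^ 2 * y = μ ^ 2 * ((γ * c i / cbar) ^ 2 / y + y) := by
    intro y
    rw [mul_add, mul_div_assoc', ← mul_pow, ← hc_eq]
  simp only [hscale]
  exact mul_le_mul_of_nonneg_left (sq_div_add_clamp_le hm hαℓ (hφ i)) (sq_nonneg μ)
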